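/- arXiv:2203.14422 — 5 statements merged into one kernel-verified Lean document; each statement's English description precedes it below -/
import Mathlib

section
/- Let p be a prime and let λ = (λ₁, λ₂, …, λ_p) ∈ ℤ^p. Then the sum of the entries |λ| = λ₁ + λ₂ + ⋯ + λ_p is divisible by p if and only if the special value m_λ(ζ_{(p,1)}) = (∏_{i∈ℤ} λ[i]!)^{-1} · Σ_{σ∈S_p} ∏_{j=1}^{p} ζ_p^{(j−1)·λ_{σ⁻¹(j)}} is nonzero. -/
/-- `zetaC n` is the primitive `n`-th root of unity `exp(2π√-1/n)`. -/
noncomputable def zetaC (n : ℕ) : ℂ := Complex.exp (2 * Real.pi * Complex.I / n)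

/-- `mval n N lam` is the special value `m_λ(ζ_{(n,k)})` of the monomial symmetric
polynomial attached to `λ ∈ ℤ^N` (with `N = k*n`), i.e.
`(∏_{i∈ℤ} λ[i]!)⁻¹ · Σ_{σ∈S_N} ∏_{j=1}^{N} ζ_n^{(j-1)·λ_{σ⁻¹(j)}}`. -/
noncomputable def mval (n N : ℕ) (lam : Fin N → ℤ) : ℂ :=
  (∏ i ∈ Finset.univ.image lam,
      ((Nat.factorial ((Finset.univ.filter fun j => lam j = i).card) : ℂ)))⁻¹ *
    ∑ σ : Equiv.Perm (Fin N), ∏ j : Fin N, zetaC n ^ (((j : ℕ) : ℤ) * lam (σ⁻¹ j))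

namespace Stmt0Aux

open Finset Equiv

variable (p : ℕ) [NeZero p]

lemma zetaC_prim : IsPrimitiveRoot (zetaC p) p := by
  simpa [zetaC] using Complex.isPrimitiveRoot_exp p (NeZero.ne p)

lemma zetaC_pow_self : zetaC p ^ p = 1 := (zetaC_prim p).pow_eq_one

lemma zetaC_ne_zero : zetaC p ≠ 0 := (zetaC_prim p).ne_zero (NeZero.ne p)

/-- The additive character `x ↦ ζ^(x.val)`. -/
noncomputable def χ (x : ZMod p) : ℂ := zetaC p ^ x.val

lemma zeta_pow_mod (n : ℕ) : zetaC p ^ (n % p) = zetaC p ^ n := by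
  conv_rhs => rw [← Nat.mod_add_div n p, pow_add, pow_mul, zetaC_pow_self, one_pow, mul_one]

lemma chi_add (x y : ZMod p) : χ p (x + y) = χ p x * χ p y := by
  rw [χ, χ, χ, ZMod.val_add, zeta_pow_mod, pow_add]

omit [NeZero p] in
lemma chi_zero : χ p 0 = 1 := by rw [χ, ZMod.val_zero, pow_zero]

lemma chi_natCast (n : ℕ) : χ p ((n : ZMod p)) = zetaC p ^ n := by
  rw [χ, ZMod.val_natCast, zeta_pow_mod]

lemma chi_intCast (m : ℤ) : zetaC p ^ m = χ p ((m : ZMod p)) := by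
  have h0 : (p : ℤ) ≠ 0 := by exact_mod_cast NeZero.ne p
  have hnn : 0 ≤ m % p := Int.emod_nonneg m h0
  have h1 : zetaC p ^ m = zetaC p ^ (m % p) := by
    conv_lhs => rw [← Int.emod_add_mul_ediv m p]
    rw [zpow_add₀ (zetaC_ne_zero p), zpow_mul, zpow_natCast, zetaC_pow_self, one_zpow, mul_one]
  have h2 : ((m % p).toNat : ℤ) = m % p := Int.toNat_of_nonneg hnn
  have h3 : (((m % p).toNat : ℕ) : ZMod p) = ((m : ℤ) : ZMod p) := by
    have : (((m % p).toNat : ℤ) : ZMod p) = ((m : ℤ) : ZMod p) := by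
      rw [h2]; exact ZMod.intCast_mod m p
    exact_mod_cast this
  rw [h1, ← h2, zpow_natCast, ← chi_natCast, h3]

lemma chi_eq_one_iff (x : ZMod p) : χ p x = 1 ↔ x = 0 := by
  rw [χ, (zetaC_prim p).pow_eq_one_iff_dvd]
  constructor
  · intro h
    have hlt := ZMod.val_lt x
    exact (ZMod.val_eq_zero x).mp (Nat.eq_zero_of_dvd_of_lt h hlt)
  · rintro rfl; simp [ZMod.val_zero]

lemma chi_sum (hp1 : 1 < p) : ∑ x : ZMod p, χ p x = 0 := by
  have h : ∑ x : ZMod p, χ p x = ∑ i ∈ range p, zetaC p ^ i := by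
    refine Finset.sum_nbij' (fun x => x.val) (fun i => (i : ZMod p)) ?_ ?_ ?_ ?_ ?_
    · intro x _; exact mem_range.mpr (ZMod.val_lt x)
    · intro i _; exact mem_univ _
    · intro x _; exact ZMod.natCast_rightInverse x
    · intro i hi; exact ZMod.val_cast_of_lt (mem_range.mp hi)
    · intro x _; rfl
  rw [h]; exact (zetaC_prim p).geom_sum_eq_zero hp1

/-- The equivalence `Fin p ≃ ZMod p`. -/
def eZ : Fin p ≃ ZMod p where
  toFun j := ((j : ℕ) : ZMod p)
  invFun x := ⟨x.val, x.val_lt⟩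
  left_inv j := by ext; simp [ZMod.val_cast_of_lt j.isLt]
  right_inv x := ZMod.natCast_rightInverse x

variable (lam : Fin p → ℤ)

/-- The key statistic on permutations. -/
def T (σ : Equiv.Perm (Fin p)) : ZMod p := ∑ j, eZ p (σ j) * ((lam j : ZMod p))

/-- Translation permutation. -/
def uAdd (c : ZMod p) : Equiv.Perm (Fin p) := (eZ p).trans ((Equiv.addRight c).trans (eZ p).symm)

lemma eZ_uAdd (c : ZMod p) (j : Fin p) : eZ p (uAdd p c j) = eZ p j + c := by
  simp [uAdd]

/-- Multiplication permutation. -/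
noncomputable def vMul [Fact p.Prime] (m : ZMod p) (hm : m ≠ 0) : Equiv.Perm (Fin p) :=
  (eZ p).trans ((Equiv.mulLeft₀ m hm).trans (eZ p).symm)

lemma eZ_vMul [Fact p.Prime] (m : ZMod p) (hm : m ≠ 0) (j : Fin p) :
    eZ p (vMul p m hm j) = m * eZ p j := by
  simp [vMul]

lemma T_uAdd (c : ZMod p) (σ : Equiv.Perm (Fin p)) :
    T p lam (uAdd p c * σ) = T p lam σ + c * ∑ j, ((lam j : ZMod p)) := by
  simp only [T, Equiv.Perm.mul_apply, eZ_uAdd, add_mul, Finset.sum_add_distrib, Finset.mul_sum]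

lemma T_vMul [Fact p.Prime] (m : ZMod p) (hm : m ≠ 0) (σ : Equiv.Perm (Fin p)) :
    T p lam (vMul p m hm * σ) = m * T p lam σ := by
  simp only [T, Equiv.Perm.mul_apply, eZ_vMul, Finset.mul_sum, mul_assoc]

lemma vMul_inv_mul [Fact p.Prime] (m : ZMod p) (hm : m ≠ 0) (hm' : m⁻¹ ≠ 0) (σ : Equiv.Perm (Fin p)) :
    vMul p m⁻¹ hm' * (vMul p m hm * σ) = σ := by
  apply Equiv.ext; intro j
  apply (eZ p).injective
  simp only [Equiv.Perm.mul_apply, eZ_vMul, ← mul_assoc, inv_mul_cancel₀ hm, one_mul]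

lemma uAdd_neg_mul (c : ZMod p) (σ : Equiv.Perm (Fin p)) :
    uAdd p (-c) * (uAdd p c * σ) = σ := by
  apply Equiv.ext; intro j
  apply (eZ p).injective
  simp only [Equiv.Perm.mul_apply, eZ_uAdd, add_assoc, add_neg_cancel, add_zero]

lemma chi_finsum {ι : Type*} (s : Finset ι) (f : ι → ZMod p) :
    χ p (∑ i ∈ s, f i) = ∏ i ∈ s, χ p (f i) := by
  classical
  induction s using Finset.cons_induction with
  | empty => simp [chi_zero]
  | cons a s ha ih => rw [Finset.sum_cons, Finset.prod_cons, chi_add, ih]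

lemma vMul_vMul [Fact p.Prime] (a b : ZMod p) (ha : a ≠ 0) (hb : b ≠ 0) (hab : a * b ≠ 0) :
    vMul p a ha * vMul p b hb = vMul p (a * b) hab := by
  apply Equiv.ext; intro j
  apply (eZ p).injective
  simp only [Equiv.Perm.mul_apply, eZ_vMul, mul_assoc]

lemma vMul_one [Fact p.Prime] (h : (1 : ZMod p) ≠ 0) : vMul p 1 h = 1 := by
  apply Equiv.ext; intro j
  apply (eZ p).injective
  simp [eZ_vMul]

lemma vMul_mul_inv [Fact p.Prime] (a b : ZMod p) (ha : a ≠ 0) (hb : b ≠ 0)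
    (hab : a * b = 1) : vMul p a ha * vMul p b hb = 1 := by
  apply Equiv.ext; intro j
  apply (eZ p).injective
  simp only [Equiv.Perm.mul_apply, eZ_vMul, ← mul_assoc, hab, one_mul, Equiv.Perm.one_apply]

lemma uAdd_uAdd (a b : ZMod p) (σ : Equiv.Perm (Fin p)) :
    uAdd p a * (uAdd p b * σ) = uAdd p (b + a) * σ := by
  apply Equiv.ext; intro j
  apply (eZ p).injective
  simp only [Equiv.Perm.mul_apply, eZ_uAdd]
  ring

lemma uAdd_zero : uAdd p 0 = 1 := by
  apply Equiv.ext; intro j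
  apply (eZ p).injective
  simp only [eZ_uAdd, add_zero, Equiv.Perm.one_apply]

end Stmt0Aux

open Stmt0Aux Finset in
/-- for a prime `p` and `λ ∈ ℤ^p`, `p ∣ |λ|` iff `m_λ(ζ_{(p,1)}) ≠ 0`. -/
theorem stmt_0 (p : ℕ) (hp : p.Prime) (lam : Fin p → ℤ) :
    (p : ℤ) ∣ ∑ i, lam i ↔ mval p p lam ≠ 0 := by
  classical
  haveI : NeZero p := ⟨hp.ne_zero⟩
  haveI : Fact p.Prime := ⟨hp⟩
  have hp1 : 1 < p := hp.one_lt
  have hp0 : 0 < p := hp.pos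
  -- the constant is nonzero
  have hC : (∏ i ∈ Finset.univ.image lam,
      ((Nat.factorial ((Finset.univ.filter fun j => lam j = i).card) : ℂ)))⁻¹ ≠ 0 := by
    apply inv_ne_zero
    exact Finset.prod_ne_zero_iff.mpr fun i _ => Nat.cast_ne_zero.mpr (Nat.factorial_pos _).ne'
  -- rewrite the inner product as χ (T σ)
  have hS : ∀ σ : Equiv.Perm (Fin p),
      (∏ j : Fin p, zetaC p ^ (((j : ℕ) : ℤ) * lam (σ⁻¹ j))) = χ p (T p lam σ) := by
    intro σ
    have h1 : ∀ j : Fin p, zetaC p ^ (((j : ℕ) : ℤ) * lam (σ⁻¹ j))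
        = χ p (eZ p j * ((lam (σ⁻¹ j) : ZMod p))) := by
      intro j
      rw [chi_intCast]
      congr 1
      push_cast
      rfl
    have h2 : T p lam σ = ∑ j, eZ p j * ((lam (σ⁻¹ j) : ZMod p)) := by
      rw [T, ← Equiv.sum_comp σ (fun j => eZ p j * ((lam (σ⁻¹ j) : ZMod p)))]
      apply Finset.sum_congr rfl
      intro j _
      simp
    rw [h2, chi_finsum]
    exact Finset.prod_congr rfl fun j _ => h1 j
  have hm : mval p p lam ≠ 0 ↔ (∑ σ : Equiv.Perm (Fin p), χ p (T p lam σ)) ≠ 0 := by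
    rw [mval]
    simp only [hS]
    rw [mul_ne_zero_iff]
    exact ⟨fun h => h.2, fun h => ⟨hC, h⟩⟩
  rw [hm]
  set S := ∑ σ : Equiv.Perm (Fin p), χ p (T p lam σ) with hSdef
  set s0 : ZMod p := ∑ j, ((lam j : ZMod p)) with hs0def
  have hdvd : (p : ℤ) ∣ ∑ i, lam i ↔ s0 = 0 := by
    rw [← ZMod.intCast_zmod_eq_zero_iff_dvd]
    have : ((∑ i, lam i : ℤ) : ZMod p) = s0 := by push_cast; rfl
    rw [this]
  rw [hdvd]
  constructor
  · -- s0 = 0 → S ≠ 0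
    intro h0
    -- counts
    set N : ZMod p → ℕ := fun r => (Finset.univ.filter fun σ => T p lam σ = r).card with hNdef
    -- T is invariant under uAdd
    have hTu : ∀ (c : ZMod p) (σ : Equiv.Perm (Fin p)), T p lam (uAdd p c * σ) = T p lam σ := by
      intro c σ
      rw [T_uAdd, ← hs0def, h0, mul_zero, add_zero]
    -- (b) for r ≠ 0, N r = N 1
    have hNr : ∀ r : ZMod p, r ≠ 0 → N r = N 1 := by
      intro r hr
      have hrinv : r⁻¹ ≠ 0 := inv_ne_zero hr
      apply Finset.card_nbij' (fun σ => vMul p r⁻¹ hrinv * σ) (fun σ => vMul p r hr * σ)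
      · intro σ hσ
        simp only [Finset.mem_coe] at hσ ⊢
        rw [Finset.mem_filter] at hσ ⊢
        refine ⟨Finset.mem_univ _, ?_⟩
        rw [T_vMul, hσ.2, inv_mul_cancel₀ hr]
      · intro σ hσ
        simp only [Finset.mem_coe] at hσ ⊢
        rw [Finset.mem_filter] at hσ ⊢
        refine ⟨Finset.mem_univ _, ?_⟩
        rw [T_vMul, hσ.2, mul_one]
      · intro σ _
        beta_reduce
        rw [← mul_assoc, vMul_mul_inv p r r⁻¹ hr hrinv (mul_inv_cancel₀ hr), one_mul]
      · intro σ _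
        beta_reduce
        rw [← mul_assoc, vMul_mul_inv p r⁻¹ r hrinv hr (inv_mul_cancel₀ hr), one_mul]
    -- (c) p ∣ N 1
    have hpN : p ∣ N 1 := by
      set i0 : Fin p := ⟨0, hp0⟩ with hi0
      set s1 : Finset (Equiv.Perm (Fin p)) := Finset.univ.filter fun σ => T p lam σ = 1 with hs1
      have hcard : N 1 = ∑ v : Fin p, (s1.filter fun σ => σ i0 = v).card :=
        Finset.card_eq_sum_card_fiberwise (fun σ _ => Finset.mem_univ (σ i0))
      have hfib : ∀ v : Fin p, (s1.filter fun σ => σ i0 = v).card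
          = (s1.filter fun σ => σ i0 = i0).card := by
        intro v
        apply Finset.card_nbij' (fun σ => uAdd p (eZ p i0 - eZ p v) * σ)
          (fun σ => uAdd p (eZ p v - eZ p i0) * σ)
        · intro σ hσ
          simp only [Finset.mem_coe] at hσ ⊢
          rw [Finset.mem_filter, Finset.mem_filter] at hσ ⊢
          obtain ⟨hσ1, hσ2⟩ := hσ
          refine ⟨⟨Finset.mem_univ _, by rw [hTu]; exact hσ1.2⟩, ?_⟩
          show uAdd p (eZ p i0 - eZ p v) (σ i0) = i0
          apply (eZ p).injective
          rw [eZ_uAdd, hσ2]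
          ring
        · intro σ hσ
          simp only [Finset.mem_coe] at hσ ⊢
          rw [Finset.mem_filter, Finset.mem_filter] at hσ ⊢
          obtain ⟨hσ1, hσ2⟩ := hσ
          refine ⟨⟨Finset.mem_univ _, by rw [hTu]; exact hσ1.2⟩, ?_⟩
          show uAdd p (eZ p v - eZ p i0) (σ i0) = v
          apply (eZ p).injective
          rw [eZ_uAdd, hσ2]
          ring
        · intro σ _
          beta_reduce
          rw [uAdd_uAdd]
          have h5 : (eZ p i0 - eZ p v) + (eZ p v - eZ p i0) = 0 := by ring
          rw [h5, uAdd_zero, one_mul]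
        · intro σ _
          beta_reduce
          rw [uAdd_uAdd]
          have h5 : (eZ p v - eZ p i0) + (eZ p i0 - eZ p v) = 0 := by ring
          rw [h5, uAdd_zero, one_mul]
      rw [hcard]
      have : ∑ v : Fin p, (s1.filter fun σ => σ i0 = v).card
          = p * (s1.filter fun σ => σ i0 = i0).card := by
        rw [Finset.sum_congr rfl fun v _ => hfib v, Finset.sum_const, Finset.card_univ,
          Fintype.card_fin, smul_eq_mul]
      rw [this]
      exact Dvd.intro _ rfl
    -- (a) total count
    have hNsum : ∑ r : ZMod p, N r = p.factorial := by
      rw [← Finset.card_eq_sum_card_fiberwise (f := T p lam) (t := Finset.univ)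
        (fun σ _ => Finset.mem_univ _)]
      rw [Finset.card_univ, Fintype.card_perm, Fintype.card_fin]
    -- (d) S = N 0 - N 1
    have hSval : S = (N 0 : ℂ) - (N 1 : ℂ) := by
      have h1 : S = ∑ r : ZMod p, ∑ σ ∈ Finset.univ.filter fun σ => T p lam σ = r,
          χ p (T p lam σ) :=
        (Finset.sum_fiberwise Finset.univ (T p lam) (fun σ => χ p (T p lam σ))).symm
      have h2 : ∀ r : ZMod p, (∑ σ ∈ Finset.univ.filter fun σ => T p lam σ = r,
          χ p (T p lam σ)) = (N r : ℂ) * χ p r := by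
        intro r
        rw [Finset.sum_congr rfl (fun σ hσ => by
          rw [(Finset.mem_filter.mp hσ).2]), Finset.sum_const, nsmul_eq_mul]
      rw [h1, Finset.sum_congr rfl fun r _ => h2 r]
      rw [← Finset.add_sum_erase Finset.univ _ (Finset.mem_univ (0 : ZMod p))]
      have h3 : ∑ r ∈ Finset.univ.erase (0 : ZMod p), (N r : ℂ) * χ p r
          = (N 1 : ℂ) * ∑ r ∈ Finset.univ.erase (0 : ZMod p), χ p r := by
        rw [Finset.mul_sum]
        exact Finset.sum_congr rfl fun r hr => by
          rw [hNr r (Finset.mem_erase.mp hr).1]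
      have h4 : ∑ r ∈ Finset.univ.erase (0 : ZMod p), χ p r = -1 := by
        have := chi_sum p hp1
        rw [← Finset.add_sum_erase Finset.univ (χ p) (Finset.mem_univ (0 : ZMod p)), chi_zero]
          at this
        linear_combination this
      rw [h3, h4, chi_zero, mul_one, mul_neg_one]
      ring
    -- (e) conclude S ≠ 0
    intro hScontra
    rw [hSval, sub_eq_zero] at hScontra
    have hN01 : N 0 = N 1 := Nat.cast_injective hScontra
    have hsum2 : ∑ r : ZMod p, N r = p * N 1 := by
      rw [← Finset.add_sum_erase Finset.univ N (Finset.mem_univ (0 : ZMod p)), hN01]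
      rw [Finset.sum_congr rfl (fun r hr => hNr r (Finset.mem_erase.mp hr).1),
        Finset.sum_const, smul_eq_mul]
      rw [Finset.card_erase_of_mem (Finset.mem_univ _), Finset.card_univ, ZMod.card]
      cases p with
      | zero => omega
      | succ q => simp [Nat.succ_sub_one]; ring
    rw [hNsum] at hsum2
    have hfact : p.factorial = p * Nat.factorial (p - 1) := by
      cases p with
      | zero => omega
      | succ q => rw [Nat.factorial_succ]; simp
    rw [hfact] at hsum2
    have : Nat.factorial (p - 1) = N 1 := Nat.eq_of_mul_eq_mul_left hp0 hsum2
    have : p ∣ Nat.factorial (p - 1) := this ▸ hpN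
    have := (hp.dvd_factorial).mp this
    omega
  · -- S ≠ 0 → s0 = 0
    intro hSne
    by_contra h0
    apply hSne
    have hshift : S = χ p s0 * S := by
      calc S = ∑ σ : Equiv.Perm (Fin p), χ p (T p lam (Equiv.mulLeft (uAdd p 1) σ)) :=
            (Equiv.sum_comp (Equiv.mulLeft (uAdd p 1)) (fun σ => χ p (T p lam σ))).symm
        _ = ∑ σ : Equiv.Perm (Fin p), χ p s0 * χ p (T p lam σ) := by
            apply Finset.sum_congr rfl
            intro σ _
            rw [Equiv.coe_mulLeft, T_uAdd, ← hs0def, one_mul, chi_add, mul_comm]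
        _ = χ p s0 * S := by rw [← Finset.mul_sum]
    have : (χ p s0 - 1) * S = 0 := by
      rw [sub_mul, one_mul, ← hshift, sub_self]
    rcases mul_eq_zero.mp this with h | h
    · exfalso
      exact h0 ((chi_eq_one_iff p s0).mp (sub_eq_zero.mp h))
    · exact h
end

section
/- Let n, k be positive integers, let λ₁, λ₂ ∈ ℤ with n ∤ (λ₂ − λ₁), let 0 ≤ a ≤ kn, let λ ∈ ℤ^{kn} have its first a entries equal to λ₁ and its remaining kn − a entries equal to λ₂, and let λ′ ∈ ℤ^{kn} have its first kn − a entries equal to λ₂ − λ₁ and its remaining a entries equal to n. Then m_λ(ζ_{(n,k)}) = (−1)^{k(n+1)λ₁} · m_{λ′}(ζ_{(n,k)}). -/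
open Finset

lemma prod_zpow_sum {α : Type*} (x : ℂ) (hx : x ≠ 0) (s : Finset α) (f : α → ℤ) :
    ∏ i ∈ s, x ^ f i = x ^ (∑ i ∈ s, f i) := by
  induction s using Finset.cons_induction with
  | empty => simp
  | cons a s ha ih => rw [prod_cons, sum_cons, ih, ← zpow_add₀ hx]

lemma card_filter_lt_fin (N b : ℕ) (hb : b ≤ N) :
    ((Finset.univ : Finset (Fin N)).filter fun j : Fin N => (j : ℕ) < b).card = b := by
  have h : ((Finset.univ : Finset (Fin N)).filter fun j : Fin N => (j : ℕ) < b)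
      = (Finset.range b).attachFin (fun m hm => lt_of_lt_of_le (Finset.mem_range.mp hm) hb) := by
    ext j
    simp [Finset.mem_attachFin]
  rw [h, Finset.card_attachFin, Finset.card_range]

lemma card_filter_not_lt_fin (N b : ℕ) (hb : b ≤ N) :
    ((Finset.univ : Finset (Fin N)).filter fun j : Fin N => ¬ (j : ℕ) < b).card = N - b := by
  have h := Finset.card_filter_add_card_filter_not
    (s := (Finset.univ : Finset (Fin N))) (p := fun j : Fin N => (j : ℕ) < b)
  rw [card_filter_lt_fin N b hb] at h
  simp only [Finset.card_univ, Fintype.card_fin] at h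
  omega

lemma prefac (N b : ℕ) (hN : 0 < N) (hb : b ≤ N) (v w : ℤ) (hvw : v ≠ w)
    (c : Fin N → ℤ) (hc : ∀ j, c j = if (j : ℕ) < b then v else w) :
    (∏ i ∈ Finset.univ.image c,
        ((Nat.factorial ((Finset.univ.filter fun j => c j = i).card) : ℂ)))
      = (Nat.factorial b : ℂ) * (Nat.factorial (N - b) : ℂ) := by
  have hfv : (Finset.univ.filter fun j => c j = v)
      = (Finset.univ.filter fun j : Fin N => (j : ℕ) < b) := by
    ext j
    simp only [mem_filter, mem_univ, true_and, hc j]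
    by_cases hj : (j : ℕ) < b <;> simp [hj, hvw, hvw.symm]
  have hfw : (Finset.univ.filter fun j => c j = w)
      = (Finset.univ.filter fun j : Fin N => ¬ (j : ℕ) < b) := by
    ext j
    simp only [mem_filter, mem_univ, true_and, hc j]
    by_cases hj : (j : ℕ) < b <;> simp [hj, hvw, hvw.symm]
  rcases Nat.eq_zero_or_pos b with hb0 | hbpos
  · subst hb0
    have hcw : ∀ j, c j = w := fun j => by rw [hc j]; simp
    have himg : Finset.univ.image c = {w} := by
      apply Finset.eq_singleton_iff_unique_mem.mpr
      constructor
      · exact Finset.mem_image.mpr ⟨⟨0, hN⟩, mem_univ _, hcw _⟩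
      · intro x hx
        obtain ⟨j, _, rfl⟩ := Finset.mem_image.mp hx
        exact hcw j
    rw [himg, prod_singleton]
    have : (Finset.univ.filter fun j => c j = w) = Finset.univ := by
      ext j; simp [hcw j]
    rw [this]
    simp [Nat.factorial]
  · rcases Nat.lt_or_ge b N with hbN | hbN
    · have himg : Finset.univ.image c = {v, w} := by
        ext i
        simp only [Finset.mem_image, mem_univ, true_and, Finset.mem_insert, Finset.mem_singleton]
        constructor
        · rintro ⟨j, _, rfl⟩
          rw [hc j]
          split <;> simp
        · rintro (rfl | rfl)
          · exact ⟨⟨0, hN⟩, by rw [hc]; simp [hbpos]⟩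
          · exact ⟨⟨b, hbN⟩, by rw [hc]; simp⟩
      rw [himg, Finset.prod_pair hvw, hfv, hfw, card_filter_lt_fin N b hb,
        card_filter_not_lt_fin N b hb]
    · have hb' : b = N := le_antisymm hb hbN
      subst hb'
      have hcv : ∀ j, c j = v := fun j => by rw [hc j]; simp [j.isLt]
      have himg : Finset.univ.image c = {v} := by
        apply Finset.eq_singleton_iff_unique_mem.mpr
        exact ⟨Finset.mem_image.mpr ⟨⟨0, hN⟩, mem_univ _, hcv _⟩,
          fun x hx => by obtain ⟨j, _, rfl⟩ := Finset.mem_image.mp hx; exact hcv j⟩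
      rw [himg, prod_singleton]
      have : (Finset.univ.filter fun j => c j = v) = Finset.univ := by
        ext j; simp [hcv j]
      rw [this]
      simp [Nat.factorial]

lemma zetaC_ne_zero (n : ℕ) : zetaC n ≠ 0 := Complex.exp_ne_zero _

lemma zetaC_pow_n (n : ℕ) (hn : 0 < n) : zetaC n ^ n = 1 := by
  have hn' : (n : ℂ) ≠ 0 := Nat.cast_ne_zero.mpr hn.ne'
  rw [zetaC, ← Complex.exp_nat_mul,
    show (n : ℂ) * (2 * Real.pi * Complex.I / n) = 2 * Real.pi * Complex.I by
      field_simp]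
  exact Complex.exp_two_pi_mul_I

lemma zetaC_sign (n k : ℕ) (hn : 0 < n) (hk : 0 < k) (lam1 : ℤ) :
    zetaC n ^ (lam1 * ∑ j : Fin (k * n), ((j : ℕ) : ℤ))
      = (-1 : ℂ) ^ ((k * (n + 1) : ℤ) * lam1) := by
  have hN : 0 < k * n := Nat.mul_pos hk hn
  have hn' : (n : ℂ) ≠ 0 := Nat.cast_ne_zero.mpr hn.ne'
  set t : ℕ := ∑ j ∈ Finset.range (k * n), j with ht0
  have hT : (∑ j : Fin (k * n), ((j : ℕ) : ℤ)) = (t : ℤ) := by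
    rw [Fin.sum_univ_eq_sum_range (fun m => (m : ℤ))]
    rw [ht0, Nat.cast_sum]
  set m : ℕ := k * (k * n - 1) with hm
  have hnat : t * 2 = n * m := by
    rw [ht0, Finset.sum_range_id_mul_two, hm]
    ring
  have hzt : zetaC n ^ t = (-1 : ℂ) ^ m := by
    rw [zetaC, ← Complex.exp_nat_mul, ← Complex.exp_pi_mul_I, ← Complex.exp_nat_mul]
    congr 1
    have h2 : ((t : ℂ)) * 2 = (n : ℂ) * m := by exact_mod_cast congrArg (Nat.cast : ℕ → ℂ) hnat
    field_simp
    linear_combination h2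
  have hpar : ∃ c : ℤ, (m : ℤ) * lam1 = (k * (n + 1) : ℤ) * lam1 + 2 * c := by
    obtain ⟨e, he⟩ := Int.even_mul_succ_self ((k : ℤ) - 1)
    have he' : ((k : ℤ) - 1) * k = e + e := by linear_combination he
    refine ⟨lam1 * ((n : ℤ) * e - k), ?_⟩
    have hm' : (m : ℤ) = (k : ℤ) * ((k : ℤ) * n - 1) := by
      rw [hm]
      push_cast [Nat.cast_sub (Nat.one_le_iff_ne_zero.mpr hN.ne')]
      ring
    rw [hm']
    linear_combination (lam1 * (n : ℤ)) * he'
  obtain ⟨c, hc⟩ := hpar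
  rw [hT, mul_comm lam1 (t : ℤ), zpow_mul, zpow_natCast, hzt,
    ← zpow_natCast (-1 : ℂ) m, ← zpow_mul, hc,
    zpow_add₀ (by norm_num : (-1 : ℂ) ≠ 0), zpow_mul (-1 : ℂ) 2 c,
    show ((-1 : ℂ) ^ (2 : ℤ)) = 1 by norm_num, one_zpow, mul_one]

/-- for `λ = (λ₁,…,λ₁,λ₂,…,λ₂)` (`a` copies of `λ₁`) with `n ∤ λ₂ - λ₁`,
`m_λ(ζ_{(n,k)}) = (-1)^{k(n+1)λ₁} m_{λ'}(ζ_{(n,k)})` where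
`λ' = (λ₂-λ₁,…,λ₂-λ₁,n,…,n)` (`kn - a` copies of `λ₂-λ₁`). -/
theorem stmt_2 (n k : ℕ) (hn : 0 < n) (hk : 0 < k) (lam1 lam2 : ℤ)
    (h : ¬ (n : ℤ) ∣ (lam2 - lam1)) (a : ℕ) (ha : a ≤ k * n)
    (lam lam' : Fin (k * n) → ℤ)
    (hlam : ∀ j, lam j = if (j : ℕ) < a then lam1 else lam2)
    (hlam' : ∀ j, lam' j = if (j : ℕ) < k * n - a then lam2 - lam1 else (n : ℤ)) :
    mval n (k * n) lam =
      (-1 : ℂ) ^ ((k * (n + 1) : ℤ) * lam1) * mval n (k * n) lam' := by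
  have hN : 0 < k * n := Nat.mul_pos hk hn
  haveI : NeZero (k * n) := ⟨hN.ne'⟩
  have hz0 : zetaC n ≠ 0 := zetaC_ne_zero n
  have hzn : zetaC n ^ (n : ℤ) = 1 := by rw [zpow_natCast]; exact zetaC_pow_n n hn
  have hd0 : lam2 - lam1 ≠ 0 := by intro h0; exact h (h0 ▸ dvd_zero _)
  have h12 : lam1 ≠ lam2 := fun e => hd0 (by rw [e, sub_self])
  have hdn : lam2 - lam1 ≠ (n : ℤ) := fun e => h (e ▸ dvd_refl _)
  have hpre1 := prefac (k * n) a hN ha lam1 lam2 h12 lam hlam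
  have hpre2 := prefac (k * n) (k * n - a) hN (Nat.sub_le _ _) (lam2 - lam1) (n : ℤ) hdn
    lam' hlam'
  rw [Nat.sub_sub_self ha] at hpre2
  -- the rotation τ
  set τ : Equiv.Perm (Fin (k * n)) := Equiv.addRight ((@Nat.cast (Fin (k * n)) (Fin.NatCast.instNatCast (k * n)) a)) with hτ
  have hτval : ∀ j : Fin (k * n), ((τ j : Fin (k * n)) : ℕ) = ((j : ℕ) + a) % (k * n) := by
    intro j
    rw [hτ]
    simp only [Equiv.coe_addRight]
    simp only [Fin.add_def, Fin.val_natCast]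
    rw [Nat.add_mod, Nat.mod_mod_of_dvd a dvd_rfl, ← Nat.add_mod]
  have himg : ((Finset.univ : Finset (Fin (k * n))).filter
        fun i : Fin (k * n) => (i : ℕ) < k * n - a).image τ
      = (Finset.univ.filter fun i : Fin (k * n) => ¬ (i : ℕ) < a) := by
    ext j
    simp only [Finset.mem_image, Finset.mem_filter, Finset.mem_univ, true_and]
    constructor
    · rintro ⟨i, hi, rfl⟩
      rw [hτval i]
      have hlt : (i : ℕ) + a < k * n := by omega
      rw [Nat.mod_eq_of_lt hlt]
      omega
    · intro hj
      have hjlt := j.isLt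
      refine ⟨⟨(j : ℕ) - a, by omega⟩, by simpa using by omega, ?_⟩
      apply Fin.ext
      rw [hτval]
      show ((j : ℕ) - a + a) % (k * n) = (j : ℕ)
      rw [show (j : ℕ) - a + a = (j : ℕ) by omega, Nat.mod_eq_of_lt j.isLt]
  have hterm : ∀ (c : Fin (k * n) → ℤ) (σ : Equiv.Perm (Fin (k * n))),
      (∏ j : Fin (k * n), zetaC n ^ (((j : ℕ) : ℤ) * c (σ⁻¹ j)))
        = zetaC n ^ (∑ i : Fin (k * n), ((σ i : ℕ) : ℤ) * c i) := by
    intro c σ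
    rw [prod_zpow_sum _ hz0]
    congr 1
    rw [← Equiv.sum_comp σ (fun j => ((j : ℕ) : ℤ) * c (σ⁻¹ j))]
    exact Finset.sum_congr rfl fun i _ => by simp
  set T : ℤ := ∑ j : Fin (k * n), ((j : ℕ) : ℤ) with hT
  have hsplit1 : ∀ σ : Equiv.Perm (Fin (k * n)),
      (∑ i : Fin (k * n), ((σ i : ℕ) : ℤ) * lam i)
        = lam1 * T + (lam2 - lam1) *
            ∑ i ∈ Finset.univ.filter (fun i : Fin (k * n) => ¬ (i : ℕ) < a),
              ((σ i : ℕ) : ℤ) := by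
    intro σ
    have hTσ : (∑ i : Fin (k * n), ((σ i : ℕ) : ℤ)) = T := by
      rw [hT]; exact Equiv.sum_comp σ (fun j => ((j : ℕ) : ℤ))
    rw [← Finset.sum_filter_add_sum_filter_not Finset.univ
      (fun i : Fin (k * n) => (i : ℕ) < a) (fun i => ((σ i : ℕ) : ℤ) * lam i)]
    rw [← Finset.sum_filter_add_sum_filter_not Finset.univ
      (fun i : Fin (k * n) => (i : ℕ) < a) (fun i => ((σ i : ℕ) : ℤ))] at hTσ
    have h1 : (∑ i ∈ Finset.univ.filter (fun i : Fin (k * n) => (i : ℕ) < a),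
          ((σ i : ℕ) : ℤ) * lam i)
        = (∑ i ∈ Finset.univ.filter (fun i : Fin (k * n) => (i : ℕ) < a),
            ((σ i : ℕ) : ℤ)) * lam1 := by
      rw [Finset.sum_mul]
      exact Finset.sum_congr rfl fun i hi => by
        rw [hlam i, if_pos (Finset.mem_filter.mp hi).2]
    have h2 : (∑ i ∈ Finset.univ.filter (fun i : Fin (k * n) => ¬ (i : ℕ) < a),
          ((σ i : ℕ) : ℤ) * lam i)
        = (∑ i ∈ Finset.univ.filter (fun i : Fin (k * n) => ¬ (i : ℕ) < a),
            ((σ i : ℕ) : ℤ)) * lam2 := by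
      rw [Finset.sum_mul]
      exact Finset.sum_congr rfl fun i hi => by
        rw [hlam i, if_neg (Finset.mem_filter.mp hi).2]
    rw [h1, h2]
    linear_combination lam1 * hTσ
  have hsplit2 : ∀ σ : Equiv.Perm (Fin (k * n)),
      (∑ i : Fin (k * n), ((σ i : ℕ) : ℤ) * lam' i)
        = (lam2 - lam1) *
            (∑ i ∈ Finset.univ.filter (fun i : Fin (k * n) => (i : ℕ) < k * n - a),
              ((σ i : ℕ) : ℤ))
          + (n : ℤ) *
            ∑ i ∈ Finset.univ.filter (fun i : Fin (k * n) => ¬ (i : ℕ) < k * n - a),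
              ((σ i : ℕ) : ℤ) := by
    intro σ
    rw [← Finset.sum_filter_add_sum_filter_not Finset.univ
      (fun i : Fin (k * n) => (i : ℕ) < k * n - a) (fun i => ((σ i : ℕ) : ℤ) * lam' i)]
    have h1 : (∑ i ∈ Finset.univ.filter (fun i : Fin (k * n) => (i : ℕ) < k * n - a),
          ((σ i : ℕ) : ℤ) * lam' i)
        = (∑ i ∈ Finset.univ.filter (fun i : Fin (k * n) => (i : ℕ) < k * n - a),
            ((σ i : ℕ) : ℤ)) * (lam2 - lam1) := by
      rw [Finset.sum_mul]
      exact Finset.sum_congr rfl fun i hi => by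
        rw [hlam' i, if_pos (Finset.mem_filter.mp hi).2]
    have h2 : (∑ i ∈ Finset.univ.filter (fun i : Fin (k * n) => ¬ (i : ℕ) < k * n - a),
          ((σ i : ℕ) : ℤ) * lam' i)
        = (∑ i ∈ Finset.univ.filter (fun i : Fin (k * n) => ¬ (i : ℕ) < k * n - a),
            ((σ i : ℕ) : ℤ)) * (n : ℤ) := by
      rw [Finset.sum_mul]
      exact Finset.sum_congr rfl fun i hi => by
        rw [hlam' i, if_neg (Finset.mem_filter.mp hi).2]
    rw [h1, h2]
    ring
  have hAB : ∀ σ : Equiv.Perm (Fin (k * n)),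
      (∑ i ∈ Finset.univ.filter (fun i : Fin (k * n) => (i : ℕ) < k * n - a),
          (((σ * τ) i : ℕ) : ℤ))
        = ∑ i ∈ Finset.univ.filter (fun i : Fin (k * n) => ¬ (i : ℕ) < a),
            ((σ i : ℕ) : ℤ) := by
    intro σ
    rw [← himg, Finset.sum_image (fun x _ y _ hxy => τ.injective hxy)]
    rfl
  have hsum : (∑ σ : Equiv.Perm (Fin (k * n)),
        ∏ j : Fin (k * n), zetaC n ^ (((j : ℕ) : ℤ) * lam (σ⁻¹ j)))
      = zetaC n ^ (lam1 * T) *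
        ∑ σ : Equiv.Perm (Fin (k * n)),
          ∏ j : Fin (k * n), zetaC n ^ (((j : ℕ) : ℤ) * lam' (σ⁻¹ j)) := by
    rw [Finset.mul_sum]
    rw [← Equiv.sum_comp (Equiv.mulRight τ)
      (fun σ : Equiv.Perm (Fin (k * n)) => zetaC n ^ (lam1 * T) *
        ∏ j : Fin (k * n), zetaC n ^ (((j : ℕ) : ℤ) * lam' (σ⁻¹ j)))]
    refine Finset.sum_congr rfl fun σ _ => ?_
    simp only [Equiv.coe_mulRight]
    rw [hterm lam σ, hterm lam' (σ * τ), hsplit1 σ, hsplit2 (σ * τ), hAB σ,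
      zpow_add₀ hz0, zpow_add₀ hz0, zpow_mul (zetaC n) (n : ℤ), hzn, one_zpow, mul_one]
  simp only [mval]
  rw [hpre1, hpre2, hsum, hT, zetaC_sign n k hn hk lam1]
  ring
end

section
/- Let n, k, l be positive integers. For λ ∈ Λ_n^k and μ ∈ Λ_n^{k+l}, write λ ◁ μ if for every 1 ≤ a ≤ n the number of entries of λ equal to a is at most the number of entries of μ equal to a; in that case let μ∖λ ∈ Λ_n^l denote the nondecreasing sequence obtained by removing the entries of λ from μ (with multiplicity). Then for every μ ∈ Λ_n^{k+l}, m_μ(ζ_{(n,k+l)}) = Σ_{λ ∈ Λ_n^k, λ ◁ μ} m_λ(ζ_{(n,k)}) · m_{μ∖λ}(ζ_{(n,l)}). -/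
/-- An element of `Λ_n^k` (a nondecreasing sequence) is identified with the multiset of
its entries; `mvalM n s` is the corresponding special value `m_λ(ζ_{(n,k)})`, obtained
by evaluating `mval` on the nondecreasing enumeration of `s`. -/
noncomputable def mvalM (n : ℕ) (s : Multiset ℤ) : ℂ :=
  mval n s.card (fun j => (s.sort (· ≤ ·)).getD (j : ℕ) 0)

namespace Stmt9

open Finset

/-- The multiset of values of a tuple. -/
def vals {N : ℕ} (f : Fin N → ℤ) : Multiset ℤ := (List.ofFn f : Multiset ℤ)

lemma card_vals {N : ℕ} (f : Fin N → ℤ) : Multiset.card (vals f) = N := by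
  simp [vals]

lemma vals_comp_perm {N : ℕ} (f : Fin N → ℤ) (σ : Equiv.Perm (Fin N)) :
    vals (f ∘ σ) = vals f := by
  simpa [vals, Multiset.coe_eq_coe] using σ.ofFn_comp_perm f

lemma exists_perm_of_vals_eq {N : ℕ} {f g : Fin N → ℤ} (h : vals f = vals g) :
    ∃ σ : Equiv.Perm (Fin N), f ∘ σ = g := by
  have hp : List.Perm (List.ofFn f) (List.ofFn g) := Multiset.coe_eq_coe.mp h
  set τ := Tuple.sort f with hτ
  set τ' := Tuple.sort g with hτ'
  have h1 : List.ofFn (f ∘ τ) = List.ofFn (g ∘ τ') := by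
    refine (fun hp' h1' h2' => List.Perm.eq_of_sortedLE h1' h2' hp') ?_ ?_ ?_
    · exact (τ.ofFn_comp_perm f).trans (hp.trans (τ'.ofFn_comp_perm g).symm)
    · exact (Tuple.monotone_sort f).sortedLE_ofFn
    · exact (Tuple.monotone_sort g).sortedLE_ofFn
  have h2 : f ∘ τ = g ∘ τ' := List.ofFn_inj.mp h1
  refine ⟨(τ'⁻¹ : Equiv.Perm (Fin N)).trans τ, ?_⟩
  funext x
  have h3 := congrFun h2 (τ'⁻¹ x)
  simpa using h3

/-- the nondecreasing enumeration of a multiset, as a tuple -/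
def enumF (N : ℕ) (s : Multiset ℤ) : Fin N → ℤ := fun j => (s.sort (· ≤ ·)).getD (j : ℕ) 0

/-- the finset of all rearrangements of the enumeration of `s` -/
noncomputable def RR (N : ℕ) (s : Multiset ℤ) : Finset (Fin N → ℤ) :=
  Finset.univ.image (fun σ : Equiv.Perm (Fin N) => enumF N s ∘ σ)

lemma vals_enumF {N : ℕ} {s : Multiset ℤ} (h : Multiset.card s = N) :
    vals (enumF N s) = s := by
  have hl : (s.sort (· ≤ ·)).length = N := by rw [Multiset.length_sort, h]
  have h2 : List.ofFn (enumF N s) = s.sort (· ≤ ·) := by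
    subst hl
    have h3 : enumF _ s = fun i : Fin (s.sort (· ≤ ·)).length => (s.sort (· ≤ ·))[(i : ℕ)] := by
      funext i
      exact List.getD_eq_getElem _ _ i.isLt
    rw [h3, List.ofFn_getElem]
  rw [vals, h2, Multiset.sort_eq]

lemma mem_RR {N : ℕ} {s : Multiset ℤ} (h : Multiset.card s = N) (e : Fin N → ℤ) :
    e ∈ RR N s ↔ vals e = s := by
  constructor
  · intro he
    rw [RR, Finset.mem_image] at he
    obtain ⟨σ, -, rfl⟩ := he
    rw [vals_comp_perm, vals_enumF h]
  · intro hv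
    obtain ⟨σ, hσ⟩ := exists_perm_of_vals_eq ((vals_enumF h).trans hv.symm)
    exact Finset.mem_image.mpr ⟨σ, Finset.mem_univ _, hσ⟩

lemma fiber_card (N : ℕ) (lam : Fin N → ℤ) {e : Fin N → ℤ}
    (he : e ∈ Finset.univ.image (fun σ : Equiv.Perm (Fin N) => lam ∘ ⇑σ)) :
    (Finset.univ.filter fun σ : Equiv.Perm (Fin N) => lam ∘ ⇑σ = e).card
      = ∏ i ∈ Finset.univ.image lam,
          (Nat.factorial ((Finset.univ.filter fun j => lam j = i).card)) := by
  classical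
  obtain ⟨τ, -, hτ⟩ := Finset.mem_image.mp he
  have hlam : lam = e ∘ ⇑τ⁻¹ := by
    rw [← hτ]; funext x; simp
  have hbij : (Finset.univ.filter fun σ : Equiv.Perm (Fin N) => lam ∘ ⇑σ = e).card
      = (Finset.univ.filter fun σ : Equiv.Perm (Fin N) => lam ∘ ⇑σ = lam).card := by
    apply Finset.card_nbij' (fun σ => σ * τ⁻¹) (fun σ => σ * τ)
    · intro σ hσ
      rw [Finset.mem_coe, Finset.mem_filter] at hσ ⊢
      refine ⟨Finset.mem_univ _, ?_⟩
      funext x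
      show lam (σ (τ⁻¹ x)) = lam x
      have h1 : lam (σ (τ⁻¹ x)) = e (τ⁻¹ x) := congrFun hσ.2 _
      have h2 : lam x = e (τ⁻¹ x) := by
        have h3 := congrFun hτ (τ⁻¹ x)
        simpa using h3
      rw [h1, h2]
    · intro σ hσ
      rw [Finset.mem_coe, Finset.mem_filter] at hσ ⊢
      refine ⟨Finset.mem_univ _, ?_⟩
      funext x
      show lam (σ (τ x)) = e x
      have h1 : lam (σ (τ x)) = lam (τ x) := congrFun hσ.2 _
      exact h1.trans (congrFun hτ x)
    · intro σ _; simp [mul_assoc]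
    · intro σ _; simp [mul_assoc]
  rw [hbij]
  have hcard : (Finset.univ.filter fun σ : Equiv.Perm (Fin N) => lam ∘ ⇑σ = lam).card
      = Fintype.card {σ : Equiv.Perm (Fin N) // lam ∘ ⇑σ = lam} :=
    (Fintype.card_subtype _).symm
  rw [hcard, DomMulAct.stabilizer_card' lam]
  refine Finset.prod_congr rfl fun i _ => ?_
  rw [Fintype.card_subtype]

lemma mval_eq_sum (n N : ℕ) (lam : Fin N → ℤ) :
    mval n N lam = ∑ e ∈ Finset.univ.image (fun σ : Equiv.Perm (Fin N) => lam ∘ ⇑σ),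
      ∏ j : Fin N, zetaC n ^ (((j : ℕ) : ℤ) * e j) := by
  classical
  rw [mval]
  have h1 : (∑ σ : Equiv.Perm (Fin N), ∏ j : Fin N, zetaC n ^ (((j : ℕ) : ℤ) * lam (σ⁻¹ j)))
      = ∑ σ : Equiv.Perm (Fin N),
          (fun e : Fin N → ℤ => ∏ j : Fin N, zetaC n ^ (((j : ℕ) : ℤ) * e j)) (lam ∘ ⇑σ) :=
    Equiv.sum_comp (Equiv.inv (Equiv.Perm (Fin N)))
      (fun σ => (fun e : Fin N → ℤ => ∏ j : Fin N, zetaC n ^ (((j : ℕ) : ℤ) * e j)) (lam ∘ ⇑σ))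
  rw [h1, Finset.sum_comp (fun e : Fin N → ℤ => ∏ j : Fin N, zetaC n ^ (((j : ℕ) : ℤ) * e j))
    (fun σ : Equiv.Perm (Fin N) => lam ∘ ⇑σ)]
  set C : ℕ := ∏ i ∈ Finset.univ.image lam,
      (Nat.factorial ((Finset.univ.filter fun j => lam j = i).card)) with hC
  have h2 : ∀ e ∈ Finset.univ.image (fun σ : Equiv.Perm (Fin N) => lam ∘ ⇑σ),
      (Finset.univ.filter fun σ : Equiv.Perm (Fin N) => lam ∘ ⇑σ = e).card
        • ((fun e : Fin N → ℤ => ∏ j : Fin N, zetaC n ^ (((j : ℕ) : ℤ) * e j)) e)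
      = (C : ℂ) * ∏ j : Fin N, zetaC n ^ (((j : ℕ) : ℤ) * e j) := by
    intro e he
    rw [fiber_card N lam he, nsmul_eq_mul]
  rw [Finset.sum_congr rfl h2, ← Finset.mul_sum]
  have h3 : (∏ i ∈ Finset.univ.image lam,
      ((Nat.factorial ((Finset.univ.filter fun j => lam j = i).card) : ℂ))) = (C : ℂ) := by
    rw [hC, Nat.cast_prod]
  rw [h3, inv_mul_cancel_left₀]
  exact Nat.cast_ne_zero.mpr (Finset.prod_ne_zero_iff.mpr fun i _ => Nat.factorial_ne_zero _)

lemma mvalM_eq_sum (n : ℕ) (s : Multiset ℤ) (N : ℕ) (h : Multiset.card s = N) :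
    mvalM n s = ∑ e ∈ RR N s, ∏ j : Fin N, zetaC n ^ (((j : ℕ) : ℤ) * e j) := by
  subst h
  exact mval_eq_sum n _ (enumF _ s)

lemma zetaC_pow_n {n : ℕ} (hn : n ≠ 0) : zetaC n ^ (n : ℤ) = 1 := by
  rw [zetaC, zpow_natCast, ← Complex.exp_nat_mul]
  have h : (n : ℂ) * (2 * Real.pi * Complex.I / n) = 2 * Real.pi * Complex.I := by
    rw [mul_div_assoc']
    exact mul_div_cancel_left₀ _ (Nat.cast_ne_zero.mpr hn)
  rw [h, Complex.exp_two_pi_mul_I]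

lemma zetaC_zpow_shift {n : ℕ} (hn : n ≠ 0) {c : ℤ} (hc : (n : ℤ) ∣ c) (j m : ℤ) :
    zetaC n ^ ((c + j) * m) = zetaC n ^ (j * m) := by
  obtain ⟨d, rfl⟩ := hc
  have hz : zetaC n ≠ 0 := Complex.exp_ne_zero _
  rw [add_mul, zpow_add₀ hz, show ((n : ℤ) * d * m) = (n : ℤ) * (d * m) by ring,
    zpow_mul, zetaC_pow_n hn, one_zpow, one_mul]

lemma elim_comp {K L : ℕ} (e : Fin (K + L) → ℤ) (y : Fin K ⊕ Fin L) :
    Sum.elim (e ∘ Fin.castAdd L) (e ∘ Fin.natAdd K) y = e (finSumFinEquiv y) := by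
  cases y <;> simp

lemma sum_RR_split (n k K L : ℕ) (hn : n ≠ 0) (hK : K = k * n) (mu : Multiset ℤ)
    (hmu : Multiset.card mu = K + L) :
    (∑ e ∈ RR (K + L) mu, ∏ j : Fin (K + L), zetaC n ^ (((j : ℕ) : ℤ) * e j))
    = ∑ s ∈ (Multiset.powersetCard K mu).toFinset,
        (∑ e ∈ RR K s, ∏ j : Fin K, zetaC n ^ (((j : ℕ) : ℤ) * e j)) *
        (∑ e ∈ RR L (mu - s), ∏ j : Fin L, zetaC n ^ (((j : ℕ) : ℤ) * e j)) := by
  classical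
  have hdvd : (n : ℤ) ∣ (K : ℤ) :=
    Int.natCast_dvd_natCast.mpr (Dvd.intro_left k hK.symm)
  -- rewrite RHS into a single sum over a sigma finset
  have hrhs : (∑ s ∈ (Multiset.powersetCard K mu).toFinset,
        (∑ e ∈ RR K s, ∏ j : Fin K, zetaC n ^ (((j : ℕ) : ℤ) * e j)) *
        (∑ e ∈ RR L (mu - s), ∏ j : Fin L, zetaC n ^ (((j : ℕ) : ℤ) * e j)))
      = ∑ p ∈ (Multiset.powersetCard K mu).toFinset.sigma
            (fun s => RR K s ×ˢ RR L (mu - s)),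
          (∏ j : Fin K, zetaC n ^ (((j : ℕ) : ℤ) * p.2.1 j)) *
          (∏ j : Fin L, zetaC n ^ (((j : ℕ) : ℤ) * p.2.2 j)) := by
    rw [Finset.sum_sigma]
    refine Finset.sum_congr rfl fun s _ => ?_
    rw [Finset.sum_product]
    rw [Finset.sum_mul_sum]
  rw [hrhs]
  apply Finset.sum_nbij'
    (i := fun e => (⟨vals (e ∘ Fin.castAdd L), (e ∘ Fin.castAdd L, e ∘ Fin.natAdd K)⟩ :
      Σ _ : Multiset ℤ, (Fin K → ℤ) × (Fin L → ℤ)))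
    (j := fun p => fun x => Sum.elim p.2.1 p.2.2 (finSumFinEquiv.symm x))
  · -- i maps into target
    intro e he
    have hve : vals e = mu := (mem_RR hmu e).mp he
    have hsplit : vals e = vals (e ∘ Fin.castAdd L) + vals (e ∘ Fin.natAdd K) := by
      rw [vals, vals, vals, List.ofFn_add (f := e), ← Multiset.coe_add]
      rfl
    rw [Finset.mem_sigma]
    dsimp only
    constructor
    · rw [Multiset.mem_toFinset, Multiset.mem_powersetCard]
      constructor
      · rw [← hve, hsplit]; exact le_add_right le_rfl
      · exact card_vals _
    · rw [Finset.mem_product]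
      constructor
      · exact (mem_RR (card_vals _) _).mpr rfl
      · refine (mem_RR ?_ _).mpr ?_
        · have hle0 : vals (e ∘ Fin.castAdd L) ≤ mu := by
            rw [← hve, hsplit]; exact le_add_right le_rfl
          rw [Multiset.card_sub hle0, hmu, card_vals]
          omega
        · rw [← hve, hsplit, add_tsub_cancel_left]
  · -- j maps into source
    intro p hp
    rw [Finset.mem_sigma, Multiset.mem_toFinset, Multiset.mem_powersetCard,
      Finset.mem_product] at hp
    obtain ⟨⟨hle, hcards⟩, h1, h2⟩ := hp
    have hv1 : vals p.2.1 = p.1 := (mem_RR hcards _).mp h1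
    have hcard2 : Multiset.card (mu - p.1) = L := by
      rw [Multiset.card_sub hle, hmu, hcards]; omega
    have hv2 : vals p.2.2 = mu - p.1 := (mem_RR hcard2 _).mp h2
    refine (mem_RR hmu _).mpr ?_
    have hsplit : vals (fun x => Sum.elim p.2.1 p.2.2 (finSumFinEquiv.symm x))
        = vals ((fun x => Sum.elim p.2.1 p.2.2 (finSumFinEquiv.symm x)) ∘ Fin.castAdd L)
          + vals ((fun x => Sum.elim p.2.1 p.2.2 (finSumFinEquiv.symm x)) ∘ Fin.natAdd K) := by
      rw [vals, vals, vals, List.ofFn_add, ← Multiset.coe_add]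
      rfl
    have hL : ((fun x => Sum.elim p.2.1 p.2.2 (finSumFinEquiv.symm x)) ∘ Fin.castAdd L)
        = p.2.1 := by
      funext j; simp
    have hR : ((fun x => Sum.elim p.2.1 p.2.2 (finSumFinEquiv.symm x)) ∘ Fin.natAdd K)
        = p.2.2 := by
      funext j; simp
    rw [hsplit, hL, hR, hv1, hv2, add_comm, tsub_add_cancel_of_le hle]
  · -- left inverse
    intro e _
    funext x
    rw [elim_comp, Equiv.apply_symm_apply]
  · -- right inverse
    intro p hp
    rw [Finset.mem_sigma, Multiset.mem_toFinset, Multiset.mem_powersetCard,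
      Finset.mem_product] at hp
    obtain ⟨⟨hle, hcards⟩, h1, h2⟩ := hp
    have hv1 : vals p.2.1 = p.1 := (mem_RR hcards _).mp h1
    have hL : ((fun x => Sum.elim p.2.1 p.2.2 (finSumFinEquiv.symm x)) ∘ Fin.castAdd L)
        = p.2.1 := by
      funext j; simp
    have hR : ((fun x => Sum.elim p.2.1 p.2.2 (finSumFinEquiv.symm x)) ∘ Fin.natAdd K)
        = p.2.2 := by
      funext j; simp
    obtain ⟨s, e1, e2⟩ := p
    simp only at hL hR hv1 ⊢
    rw [hL, hR, hv1]
  · -- values agree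
    intro e _
    rw [Fin.prod_univ_add (f := fun j : Fin (K + L) => zetaC n ^ (((j : ℕ) : ℤ) * e j))]
    refine congr_arg₂ (· * ·) (Finset.prod_congr rfl fun j _ => rfl) ?_
    refine Finset.prod_congr rfl fun j _ => ?_
    have hco : ((Fin.natAdd K j : Fin (K + L)) : ℕ) = K + (j : ℕ) := rfl
    simp only [Function.comp_apply, hco]
    push_cast
    rw [zetaC_zpow_shift hn hdvd]

end Stmt9

/-- branching rule. For `μ ∈ Λ_n^{k+l}` (a multiset of `(k+l)n` integers
from `{1,…,n}`), `m_μ(ζ_{(n,k+l)}) = Σ_{λ ∈ Λ_n^k, λ ◁ μ} m_λ(ζ_{(n,k)}) m_{μ∖λ}(ζ_{(n,l)})`;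
the sub-multisets `s ≤ μ` of cardinality `kn` are exactly the `λ ∈ Λ_n^k` with `λ ◁ μ`,
and `μ∖λ` is the multiset difference `μ - s`. -/
theorem stmt_9 (n k l : ℕ) (hn : 0 < n) (hk : 0 < k) (hl : 0 < l)
    (mu : Multiset ℤ) (hcard : Multiset.card mu = (k + l) * n)
    (hmem : ∀ x ∈ mu, 1 ≤ x ∧ x ≤ (n : ℤ)) :
    mvalM n mu =
      ∑ s ∈ (Multiset.powersetCard (k * n) mu).toFinset,
        mvalM n s * mvalM n (mu - s) := by
  classical
  have hmu : Multiset.card mu = k * n + l * n := by rw [hcard]; ring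
  rw [Stmt9.mvalM_eq_sum n mu (k * n + l * n) hmu,
    Stmt9.sum_RR_split n k (k * n) (l * n) hn.ne' rfl mu hmu]
  refine Finset.sum_congr rfl fun s hs => ?_
  have hsmem := Multiset.mem_powersetCard.mp (Multiset.mem_toFinset.mp hs)
  have hcard2 : Multiset.card (mu - s) = l * n := by
    rw [Multiset.card_sub hsmem.1, hmu, hsmem.2]; omega
  rw [Stmt9.mvalM_eq_sum n s (k * n) hsmem.2, Stmt9.mvalM_eq_sum n (mu - s) (l * n) hcard2]
end

section
/- Let n, k be positive integers and let x₁, …, x_n be indeterminates. Then ∏_{i=1}^{n} ∏_{j=1}^{kn} (1 − x_i·ζ_n^{j−1}) = ∏_{i=1}^{n} (1 − x_i^n)^k = Σ_λ (−1)^{|λ|} e_λ(x₁,…,x_n) · m_λ(ζ_{(n,k)}), where the sum ranges over all partitions λ = (λ₁ ≥ λ₂ ≥ ⋯ ≥ λ_{kn} ≥ 0) with all λ_i ≤ n and |λ| ≡ 0 (mod n), and e_λ(x) := ∏_{i=1}^{kn} e_{λ_i}(x₁,…,x_n) is the product of elementary symmetric polynomials. -/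
section Aux

open Finset Equiv

lemma zetaC_prim (n : ℕ) (hn : 0 < n) : IsPrimitiveRoot (zetaC n) n :=
  Complex.isPrimitiveRoot_exp n hn.ne'

lemma nthRootsFinset_eq_image {R : Type*} [CommRing R] [IsDomain R] [DecidableEq R] {ζ : R} {n : ℕ}
    (hn : 0 < n) (h : IsPrimitiveRoot ζ n) :
    Polynomial.nthRootsFinset n (1 : R) = (Finset.range n).image (ζ ^ ·) := by
  ext x
  simp only [Polynomial.mem_nthRootsFinset hn (1 : R), Finset.mem_image, Finset.mem_range]
  constructor
  · intro hx
    haveI := NeZero.of_pos hn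
    obtain ⟨i, hi, hix⟩ := h.eq_pow_of_pow_eq_one hx
    exact ⟨i, hi, hix⟩
  · rintro ⟨i, _, rfl⟩
    rw [← pow_mul, mul_comm, pow_mul, h.pow_eq_one, one_pow]

lemma prod_one_sub_mul {R : Type*} [CommRing R] [IsDomain R] {ζ : R} {n : ℕ}
    (hn : 0 < n) (h : IsPrimitiveRoot ζ n) (x : R) :
    ∏ j ∈ Finset.range n, (1 - x * ζ ^ j) = 1 - x ^ n := by
  classical
  have h1 := IsPrimitiveRoot.pow_sub_pow_eq_prod_sub_mul (1 : R) x hn h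
  rw [one_pow, nthRootsFinset_eq_image hn h,
    Finset.prod_image (fun a ha b hb hab => h.pow_inj (mem_range.mp ha) (mem_range.mp hb) hab)] at h1
  rw [h1]
  exact Finset.prod_congr rfl fun j _ => by ring

lemma prod_one_sub_mul_k {R : Type*} [CommRing R] [IsDomain R] {ζ : R} {n : ℕ}
    (hn : 0 < n) (h : IsPrimitiveRoot ζ n) (x : R) (k : ℕ) :
    ∏ j ∈ Finset.range (k * n), (1 - x * ζ ^ j) = (1 - x ^ n) ^ k := by
  induction k with
  | zero => simp
  | succ k ih =>
    rw [Nat.succ_mul, Finset.prod_range_add, ih, pow_succ]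
    congr 1
    rw [← prod_one_sub_mul hn h x]
    refine Finset.prod_congr rfl fun j _ => ?_
    rw [pow_add, mul_comm k n, pow_mul, h.pow_eq_one, one_pow, one_mul]

open MvPolynomial in
lemma part1 (n k : ℕ) (hn : 0 < n) :
    (∏ i : Fin n, ∏ j ∈ Finset.range (k * n),
        (1 - X i * C (zetaC n ^ j) : MvPolynomial (Fin n) ℂ))
      = ∏ i : Fin n, (1 - X i ^ n) ^ k := by
  have hprim : IsPrimitiveRoot (C (zetaC n) : MvPolynomial (Fin n) ℂ) n :=
    (zetaC_prim n hn).map_of_injective (C_injective _ _)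
  refine Finset.prod_congr rfl fun i _ => ?_
  have := prod_one_sub_mul_k hn hprim (X i : MvPolynomial (Fin n) ℂ) k
  simpa only [map_pow] using this

open MvPolynomial in
lemma expand_esymm {A : Type*} [CommRing A] (n : ℕ) (c : A) :
    ∏ i : Fin n, (1 - X i * C c : MvPolynomial (Fin n) A)
      = ∑ r ∈ Finset.range (n + 1), C ((-c) ^ r) * esymm (Fin n) A r := by
  classical
  have h1 : ∀ i : Fin n, (1 - X i * C c : MvPolynomial (Fin n) A)
      = (fun i => C (-c) * X i) i + (fun _ => 1) i := by
    intro i; simp only [map_neg]; ring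
  rw [Finset.prod_congr rfl (fun i _ => h1 i), Finset.prod_add, Finset.sum_powerset]
  simp only [card_univ, Fintype.card_fin]
  refine Finset.sum_congr rfl fun r _ => ?_
  rw [esymm, Finset.mul_sum]
  refine Finset.sum_congr rfl fun t ht => ?_
  rw [Finset.prod_const_one, mul_one, Finset.prod_mul_distrib, Finset.prod_const,
    (Finset.mem_powersetCard.mp ht).2, map_pow]

open MvPolynomial in
lemma claim1 (n k : ℕ) (hn : 0 < n) :
    (∏ i : Fin n, ((1 : MvPolynomial (Fin n) ℂ) - X i ^ n) ^ k)
      = ∑ f : Fin (k * n) → Fin (n + 1),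
          C (∏ j : Fin (k * n), (-(zetaC n ^ (j : ℕ))) ^ ((f j : ℕ)))
            * ∏ j : Fin (k * n), esymm (Fin n) ℂ ((f j : ℕ)) := by
  classical
  rw [← part1 n k hn, Finset.prod_comm]
  have h2 : ∀ j : ℕ, (∏ i : Fin n, (1 - X i * C (zetaC n ^ j) : MvPolynomial (Fin n) ℂ))
      = ∑ r : Fin (n + 1), C ((-(zetaC n ^ j)) ^ (r : ℕ)) * esymm (Fin n) ℂ (r : ℕ) := by
    intro j
    rw [expand_esymm n (zetaC n ^ j), Finset.sum_range]
  rw [Finset.prod_congr rfl fun j _ => h2 j, Finset.prod_range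
    (fun j => ∑ r : Fin (n + 1), C ((-(zetaC n ^ j)) ^ (r : ℕ)) * esymm (Fin n) ℂ (r : ℕ)),
    Fintype.prod_sum]
  refine Finset.sum_congr rfl fun f _ => ?_
  rw [Finset.prod_mul_distrib, map_prod]

variable {N : ℕ} {α β : Type*} [LinearOrder α]

noncomputable def sortA (f : Fin N → α) : Fin N → α := (f ∘ Tuple.sort f) ∘ Fin.rev

lemma sortA_antitone (f : Fin N → α) : Antitone (sortA f) := by
  intro a b hab
  exact Tuple.monotone_sort f (Fin.rev_le_rev.mpr hab)

lemma sortA_comp_perm (f : Fin N → α) (σ : Equiv.Perm (Fin N)) :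
    sortA (f ∘ σ) = sortA f := by
  unfold sortA
  rw [Tuple.comp_perm_comp_sort_eq_comp_sort]

lemma sortA_eq_comp (f : Fin N → α) :
    sortA f = f ∘ (Fin.revPerm.trans (Tuple.sort f)) := rfl

lemma sortA_eq_self {f : Fin N → α} (hf : Antitone f) : sortA f = f := by
  have hg : Monotone (f ∘ Fin.revPerm) := fun a b hab => hf (Fin.rev_le_rev.mpr hab)
  have h1 : ((f ∘ Fin.revPerm) ∘ (Fin.revPerm : Equiv.Perm (Fin N)))
      ∘ (Tuple.sort ((f ∘ Fin.revPerm) ∘ (Fin.revPerm : Equiv.Perm (Fin N))))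
      = (f ∘ Fin.revPerm) ∘ Tuple.sort (f ∘ Fin.revPerm) :=
    Tuple.comp_perm_comp_sort_eq_comp_sort
  have h2 : (f ∘ Fin.revPerm) ∘ (Fin.revPerm : Equiv.Perm (Fin N)) = f := by
    funext x; simp [Function.comp]
  rw [h2] at h1
  rw [Tuple.sort_eq_refl_iff_monotone.mpr hg] at h1
  unfold sortA
  funext x
  have := congrFun h1 (Fin.rev x)
  simpa [Function.comp] using this

lemma fiber_eq_image [Fintype α] [DecidableEq α] {lam : Fin N → α} (hlam : Antitone lam) :
    (Finset.univ.filter (fun f : Fin N → α => sortA f = lam))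
      = Finset.univ.image (fun σ : Equiv.Perm (Fin N) => lam ∘ σ) := by
  ext f
  simp only [Finset.mem_filter, Finset.mem_univ, true_and, Finset.mem_image]
  constructor
  · intro hf
    refine ⟨(Fin.revPerm.trans (Tuple.sort f))⁻¹, ?_⟩
    rw [← hf, sortA_eq_comp]
    funext x
    simp [Function.comp]
  · rintro ⟨σ, rfl⟩
    rw [sortA_comp_perm, sortA_eq_self hlam]

omit [LinearOrder α] in
lemma sum_perm_comp [Fintype α] [DecidableEq α] [AddCommMonoid β]
    (lam : Fin N → α) (T : (Fin N → α) → β) :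
    ∑ σ : Perm (Fin N), T (lam ∘ σ)
      = (Fintype.card {σ : Perm (Fin N) // lam ∘ σ = lam})
          • ∑ f ∈ Finset.univ.image (fun σ : Perm (Fin N) => lam ∘ σ), T f := by
  classical
  rw [Finset.sum_comp T (fun σ : Perm (Fin N) => lam ∘ σ), Finset.smul_sum]
  refine Finset.sum_congr rfl fun f hf => ?_
  obtain ⟨σ₀, _, rfl⟩ := Finset.mem_image.mp hf
  congr 1
  rw [Fintype.card_subtype]
  refine (Finset.card_bij (fun σ _ => σ * σ₀) ?_ ?_ ?_).symm
  · intro τ hτ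
    have hτ' : lam ∘ ⇑τ = lam := (Finset.mem_filter.mp hτ).2
    simp only [Finset.mem_filter, Finset.mem_univ, true_and]
    funext x
    have := congrFun hτ' (σ₀ x)
    simpa [Function.comp] using this
  · intro a _ b _ hab
    exact mul_right_cancel hab
  · intro σ hσ
    have hσ' : lam ∘ ⇑σ = lam ∘ ⇑σ₀ := (Finset.mem_filter.mp hσ).2
    refine ⟨σ * σ₀⁻¹, ?_, by group⟩
    simp only [Finset.mem_filter, Finset.mem_univ, true_and]
    funext x
    have := congrFun hσ' (σ₀⁻¹ x)
    simpa [Function.comp] using this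

omit [LinearOrder α] in
lemma prefactor {n : ℕ} (lam : Fin N → Fin (n + 1)) :
    (∏ i ∈ Finset.univ.image (fun j => ((lam j : ℕ) : ℤ)),
        ((Nat.factorial ((Finset.univ.filter fun j => ((lam j : ℕ) : ℤ) = i).card) : ℂ)))
      = (Fintype.card {σ : Perm (Fin N) // lam ∘ σ = lam} : ℂ) := by
  classical
  have hc : Function.Injective (fun v : Fin (n + 1) => ((v : ℕ) : ℤ)) := by
    intro a b hab
    exact Fin.val_injective (Nat.cast_injective hab)
  rw [DomMulAct.stabilizer_card' lam]
  push_cast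
  have himg : Finset.univ.image (fun j => ((lam j : ℕ) : ℤ))
      = (Finset.univ.image lam).image (fun v : Fin (n + 1) => ((v : ℕ) : ℤ)) := by
    rw [Finset.image_image]; rfl
  rw [himg, Finset.prod_image (fun a _ b _ h => hc h)]
  refine Finset.prod_congr rfl fun i _ => ?_
  rw [Fintype.card_subtype]
  simp only [Nat.cast_inj, Fin.val_inj]

lemma mval_eq {n : ℕ} (lam : Fin N → Fin (n + 1)) :
    mval n N (fun j => ((lam j : ℕ) : ℤ))
      = (Fintype.card {σ : Perm (Fin N) // lam ∘ σ = lam} : ℂ)⁻¹ *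
          ∑ σ : Perm (Fin N), ∏ j : Fin N, zetaC n ^ ((j : ℕ) * (lam (σ j) : ℕ)) := by
  rw [mval, prefactor]
  congr 1
  rw [← Equiv.sum_comp (Equiv.inv (Perm (Fin N)))
    (fun σ => ∏ j : Fin N, zetaC n ^ ((j : ℕ) * (lam (σ j) : ℕ)))]
  refine Finset.sum_congr rfl fun σ _ => Finset.prod_congr rfl fun j _ => ?_
  rw [← Nat.cast_mul, zpow_natCast]
  rfl

lemma vanish {N : ℕ} (n : ℕ) (hn : 0 < n) (hdvd : n ∣ N)
    (lam : Fin N → Fin (n + 1)) (hndvd : ¬ n ∣ ∑ j, (lam j : ℕ)) :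
    ∑ σ : Perm (Fin N), ∏ j : Fin N, zetaC n ^ ((j : ℕ) * (lam (σ j) : ℕ)) = 0 := by
  classical
  have hprim : IsPrimitiveRoot (zetaC n) n := zetaC_prim n hn
  have hn2 : 2 ≤ n := by
    by_contra h
    push_neg at h
    interval_cases n
    exact hndvd (one_dvd _)
  have hN0 : N ≠ 0 := by
    rintro rfl
    exact hndvd (by simp)
  have hN2 : 1 < N := lt_of_lt_of_le hn2 (Nat.le_of_dvd (Nat.pos_of_ne_zero hN0) hdvd)
  haveI : NeZero N := ⟨hN0⟩
  set ζ := zetaC n with hζ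
  set c : Perm (Fin N) := Equiv.addRight (1 : Fin N) with hc
  set T : (Fin N → Fin (n + 1)) → ℂ := fun f => ∏ j : Fin N, ζ ^ ((j : ℕ) * (f j : ℕ)) with hT
  have hmod : ∀ i : Fin N, ((c.symm i : Fin N) : ℕ) + 1 ≡ (i : ℕ) [MOD n] := by
    intro i
    refine Nat.ModEq.of_dvd hdvd ?_
    have e1 : (c.symm i) + 1 = i := by simp [hc]
    have e2 : (i : ℕ) = (((c.symm i : Fin N) : ℕ) + (1 : Fin N).val) % N := by
      rw [← Fin.val_add, e1]
    have e3 : ((1 : Fin N) : ℕ) = 1 := by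
      rw [Fin.val_one']
      exact Nat.mod_eq_of_lt hN2
    rw [e3] at e2
    show (((c.symm i : Fin N) : ℕ) + 1) % N = (i : ℕ) % N
    rw [Nat.mod_eq_of_lt i.isLt, e2]
  have key : ∀ f : Fin N → Fin (n + 1), ζ ^ (∑ j, (f j : ℕ)) * T (f ∘ c) = T f := by
    intro f
    have s1 : T (f ∘ c) = ∏ i : Fin N, ζ ^ (((c.symm i : Fin N) : ℕ) * ((f i : ℕ))) := by
      rw [hT]
      simp only
      rw [← Equiv.prod_comp c (fun i => ζ ^ (((c.symm i : Fin N) : ℕ) * ((f i : ℕ))))]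
      refine Finset.prod_congr rfl fun j _ => ?_
      rw [Equiv.symm_apply_apply]
      rfl
    rw [s1, ← Finset.prod_pow_eq_pow_sum, ← Finset.prod_mul_distrib]
    refine Finset.prod_congr rfl fun i _ => ?_
    rw [← pow_add]
    have he : (f i : ℕ) + ((c.symm i : Fin N) : ℕ) * (f i : ℕ)
        = (((c.symm i : Fin N) : ℕ) + 1) * (f i : ℕ) := by ring
    rw [he]
    have hpmod : ∀ a : ℕ, ζ ^ a = ζ ^ (a % n) := by
      intro a
      conv_lhs => rw [← Nat.div_add_mod a n]
      rw [pow_add, pow_mul, hprim.pow_eq_one, one_pow, one_mul]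
    rw [hpmod ((((c.symm i : Fin N) : ℕ) + 1) * (f i : ℕ)), hpmod ((i : ℕ) * (f i : ℕ))]
    congr 1
    exact (hmod i).mul_right _
  set S := ∑ j, (lam j : ℕ) with hS
  set A := ∑ σ : Perm (Fin N), T (lam ∘ σ) with hA
  have h2 : ζ ^ S * A = A := by
    rw [hA, Finset.mul_sum]
    rw [← Equiv.sum_comp (Equiv.mulRight c) (fun σ : Perm (Fin N) => ζ ^ S * T (lam ∘ σ))]
    refine Finset.sum_congr rfl fun σ _ => ?_
    simp only [Equiv.coe_mulRight]
    have e : lam ∘ ⇑(σ * c) = (lam ∘ σ) ∘ c := rfl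
    rw [e]
    have eS : S = ∑ j, ((lam ∘ σ) j : ℕ) := (Equiv.sum_comp σ (fun j => (lam j : ℕ))).symm
    rw [eS]
    exact key (lam ∘ σ)
  have h3 : (ζ ^ S - 1) * A = 0 := by
    rw [sub_mul, one_mul, h2, sub_self]
  rcases mul_eq_zero.mp h3 with h | h
  · exact absurd ((hprim.pow_eq_one_iff_dvd S).mp (sub_eq_zero.mp h)) hndvd
  · exact h

end Aux

open MvPolynomial in
open scoped Classical in
/-- the generating function of the `m_λ(ζ_{(n,k)})`:
`∏_{i=1}^n ∏_{j=1}^{kn} (1 - x_i ζ_n^{j-1}) = ∏_{i=1}^n (1 - x_i^n)^k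
  = Σ_λ (-1)^{|λ|} e_λ(x) m_λ(ζ_{(n,k)})`,
the sum over partitions `λ = (λ₁ ≥ ⋯ ≥ λ_{kn} ≥ 0)` with `λ_i ≤ n` and `n ∣ |λ|`,
encoded as functions `Fin (kn) → Fin (n+1)`. -/
theorem stmt_11 (n k : ℕ) (hn : 0 < n) (hk : 0 < k) :
    (∏ i : Fin n, ∏ j ∈ Finset.range (k * n),
        (1 - X i * C (zetaC n ^ j) : MvPolynomial (Fin n) ℂ))
      = ∏ i : Fin n, (1 - X i ^ n) ^ k ∧
    (∏ i : Fin n, ((1 : MvPolynomial (Fin n) ℂ) - X i ^ n) ^ k)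
      = ∑ lam : Fin (k * n) → Fin (n + 1),
          if Antitone lam ∧ n ∣ ∑ j, (lam j : ℕ) then
            C ((-1 : ℂ) ^ (∑ j, (lam j : ℕ)) *
                mval n (k * n) (fun j => ((lam j : ℕ) : ℤ)))
              * ∏ j, esymm (Fin n) ℂ (lam j : ℕ)
          else 0 := by
  have hN : n ∣ k * n := dvd_mul_left n k
  set N := k * n with hNdef
  refine ⟨part1 n k hn, ?_⟩
  set F : (Fin N → Fin (n + 1)) → MvPolynomial (Fin n) ℂ :=
    fun f => C (∏ j : Fin N, (-(zetaC n ^ (j : ℕ))) ^ ((f j : ℕ)))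
        * ∏ j : Fin N, esymm (Fin n) ℂ ((f j : ℕ)) with hF
  calc (∏ i : Fin n, ((1 : MvPolynomial (Fin n) ℂ) - X i ^ n) ^ k)
      = ∑ f : Fin N → Fin (n + 1), F f := claim1 n k hn
    _ = ∑ lam : Fin N → Fin (n + 1),
          ∑ f ∈ Finset.univ.filter (fun f : Fin N → Fin (n + 1) => sortA f = lam), F f :=
        (Finset.sum_fiberwise Finset.univ (fun f : Fin N → Fin (n + 1) => sortA f) F).symm
    _ = _ := ?_
  refine Finset.sum_congr rfl fun lam _ => ?_
  by_cases hanti : Antitone lam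
  · have hfib := fiber_eq_image (N := N) hanti
    set S := ∑ j, (lam j : ℕ) with hS
    set E := ∏ j : Fin N, esymm (Fin n) ℂ ((lam j : ℕ)) with hE
    set T : (Fin N → Fin (n + 1)) → ℂ :=
      fun f => ∏ j : Fin N, zetaC n ^ ((j : ℕ) * (f j : ℕ)) with hT
    have hterm : ∀ f ∈ Finset.univ.filter (fun f : Fin N → Fin (n + 1) => sortA f = lam),
        F f = C ((-1 : ℂ) ^ S * T f) * E := by
      intro f hf
      rw [hfib] at hf
      obtain ⟨σ, _, rfl⟩ := Finset.mem_image.mp hf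
      have e1 : ∏ j : Fin N, esymm (Fin n) ℂ (((lam ∘ σ) j : ℕ)) = E :=
        Equiv.prod_comp σ (fun j => esymm (Fin n) ℂ ((lam j : ℕ)))
      have e2 : ∑ j, ((lam ∘ σ) j : ℕ) = S := Equiv.sum_comp σ (fun j => ((lam j : ℕ)))
      have e3 : ∏ j : Fin N, (-(zetaC n ^ (j : ℕ))) ^ (((lam ∘ σ) j : ℕ))
          = (-1 : ℂ) ^ S * T (lam ∘ σ) := by
        rw [hT]
        simp only
        rw [← e2, ← Finset.prod_pow_eq_pow_sum, ← Finset.prod_mul_distrib]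
        refine Finset.prod_congr rfl fun j _ => ?_
        rw [neg_pow, ← pow_mul]
      rw [hF]
      simp only
      rw [e1, e3]
    rw [Finset.sum_congr rfl hterm, ← Finset.sum_mul, ← map_sum, ← Finset.mul_sum]
    have hKpos : (0 : ℕ) < Fintype.card {σ : Equiv.Perm (Fin N) // lam ∘ σ = lam} :=
      Fintype.card_pos_iff.mpr ⟨⟨1, rfl⟩⟩
    have hKc : ((Fintype.card {σ : Equiv.Perm (Fin N) // lam ∘ σ = lam} : ℕ) : ℂ) ≠ 0 :=
      Nat.cast_ne_zero.mpr hKpos.ne'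
    have hM : mval n N (fun j => ((lam j : ℕ) : ℤ))
        = ∑ f ∈ Finset.univ.filter (fun f : Fin N → Fin (n + 1) => sortA f = lam), T f := by
      rw [mval_eq lam]
      rw [show (∑ σ : Equiv.Perm (Fin N), ∏ j : Fin N, zetaC n ^ ((j : ℕ) * (lam (σ j) : ℕ)))
          = ∑ σ : Equiv.Perm (Fin N), T (lam ∘ σ) from rfl]
      rw [sum_perm_comp lam T, ← hfib, nsmul_eq_mul, ← mul_assoc, inv_mul_cancel₀ hKc, one_mul]
    by_cases hdvds : n ∣ S
    · rw [if_pos ⟨hanti, hdvds⟩, hM]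
    · rw [if_neg (by tauto)]
      have h0 : ∑ f ∈ Finset.univ.filter (fun f : Fin N → Fin (n + 1) => sortA f = lam), T f
          = 0 := by
        rw [← hM, mval_eq lam, vanish n hn hN lam hdvds, mul_zero]
      rw [h0, mul_zero, map_zero, zero_mul]
  · rw [if_neg (by tauto), Finset.filter_false_of_mem, Finset.sum_empty]
    intro f _ hf
    exact hanti (hf ▸ sortA_antitone f)
end

section
/- Let n be a positive integer, let λ = (λ₁, λ₂, …, λ_n) ∈ ℤ^n satisfy |λ| = λ₁ + ⋯ + λ_n ≡ 0 (mod n), and let f : ℤ → ℂ be any function of period n (i.e. f(m + n) = f(m) for all m ∈ ℤ). Then Σ_{σ ∈ S_n} f(λ₁σ(1) + λ₂σ(2) + ⋯ + λ_nσ(n)) = n · Σ_{τ ∈ S_{n−1}} f(λ₁τ(1) + λ₂τ(2) + ⋯ + λ_{n−1}τ(n−1)), where S_n denotes the symmetric group on {1, 2, …, n}. -/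
/-- reduction formula. For `λ ∈ ℤ^n` with `n ∣ |λ|` and `f : ℤ → ℂ`
of period `n`,
`Σ_{σ ∈ S_n} f(λ₁σ(1) + ⋯ + λ_nσ(n)) = n · Σ_{τ ∈ S_{n-1}} f(λ₁τ(1) + ⋯ + λ_{n-1}τ(n-1))`.
Here `Fin n` encodes `{1,…,n}` via `i ↦ i + 1`. -/
theorem stmt_12 (n : ℕ) (hn : 0 < n) (lam : Fin n → ℤ)
    (hsum : (n : ℤ) ∣ ∑ i, lam i) (f : ℤ → ℂ)
    (hf : ∀ m : ℤ, f (m + n) = f m) :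
    ∑ σ : Equiv.Perm (Fin n), f (∑ i, lam i * (((σ i : ℕ) : ℤ) + 1))
      = n * ∑ τ : Equiv.Perm (Fin (n - 1)),
          f (∑ i : Fin (n - 1),
              lam (Fin.castLE (Nat.sub_le n 1) i) * (((τ i : ℕ) : ℤ) + 1)) := by
  obtain ⟨m, rfl⟩ : ∃ m, n = m + 1 := ⟨n - 1, (Nat.succ_pred_eq_of_pos hn).symm⟩
  -- f is invariant under adding integer multiples of n = m+1
  have hf' : ∀ (x k : ℤ), f (x + ((m+1 : ℕ) : ℤ) * k) = f x := by
    intro x k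
    induction k using Int.induction_on with
    | zero => simp
    | succ k ih =>
        have : x + ((m+1:ℕ):ℤ) * ((k:ℤ) + 1) = (x + ((m+1:ℕ):ℤ) * k) + ((m+1:ℕ):ℤ) := by
          ring
        rw [this, hf, ih]
    | pred k ih =>
        have h := hf (x + ((m+1:ℕ):ℤ) * (-(k:ℤ) - 1))
        have e : x + ((m+1:ℕ):ℤ) * (-(k:ℤ) - 1) + ((m+1:ℕ):ℤ)
            = x + ((m+1:ℕ):ℤ) * (-(k:ℤ)) := by ring
        rw [e, ih] at h
        exact h.symm
  set g : Equiv.Perm (Fin (m+1)) → ℂ :=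
    fun σ => f (∑ i, lam i * (((σ i : ℕ) : ℤ) + 1)) with hg
  -- value of finRotate
  have hval : ∀ x : Fin (m+1), ((finRotate (m+1) x : ℕ) : ℤ)
      = (x : ℤ) + 1 - ((m+1 : ℕ) : ℤ) * (if x = Fin.last m then 1 else 0) := by
    intro x
    rcases eq_or_ne x (Fin.last m) with h | h
    · rw [if_pos h, h, finRotate_last]
      simp [Fin.last]
    · rw [if_neg h]
      rw [finRotate_succ_apply, Fin.val_add_one, if_neg h]
      push_cast
      ring
  -- g invariant under left mult by finRotate
  have hrot : ∀ σ : Equiv.Perm (Fin (m+1)), g (finRotate (m+1) * σ) = g σ := by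
    intro σ
    obtain ⟨d, hd⟩ := hsum
    have hA : ∑ i, lam i * (((((finRotate (m+1)) * σ) i : ℕ) : ℤ) + 1)
        = (∑ i, lam i * (((σ i : ℕ) : ℤ) + 1))
          + ((m+1 : ℕ) : ℤ) * (d - lam (σ⁻¹ (Fin.last m))) := by
      have step : ∀ i : Fin (m+1), lam i * (((((finRotate (m+1)) * σ) i : ℕ) : ℤ) + 1)
          = lam i * (((σ i : ℕ) : ℤ) + 1) + lam i
            - ((m+1:ℕ):ℤ) * (if σ i = Fin.last m then lam i else 0) := by
        intro i
        rw [Equiv.Perm.mul_apply, hval]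
        rcases eq_or_ne (σ i) (Fin.last m) with h | h <;> simp [h] <;> ring
      simp only [step]
      rw [Finset.sum_sub_distrib, Finset.sum_add_distrib, ← Finset.mul_sum]
      have hite : (∑ i, if σ i = Fin.last m then lam i else 0)
          = lam (σ⁻¹ (Fin.last m)) := by
        rw [Finset.sum_eq_single (σ⁻¹ (Fin.last m))]
        · simp
        · intro i _ hi
          exact if_neg fun h => hi (by simpa using congrArg σ.symm h)
        · intro h
          exact absurd (Finset.mem_univ _) h
      rw [hite, hd]
      push_cast
      ring
    simp only [hg]
    rw [hA, hf']
  have hrotpow : ∀ (k : ℕ) (σ : Equiv.Perm (Fin (m+1))),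
      g ((finRotate (m+1)) ^ k * σ) = g σ := by
    intro k
    induction k with
    | zero => intro σ; simp
    | succ k ih =>
        intro σ
        rw [pow_succ', mul_assoc, hrot ((finRotate (m+1)) ^ k * σ)]
        exact ih σ
  -- extension of a permutation of Fin m to Fin (m+1) fixing last
  set ext : Equiv.Perm (Fin m) → Equiv.Perm (Fin (m+1)) :=
    fun τ => (finSuccEquivLast.symm).permCongr τ.optionCongr with hext
  have hext_cast : ∀ (τ : Equiv.Perm (Fin m)) (i : Fin m),
      ext τ (Fin.castSucc i) = Fin.castSucc (τ i) := by
    intro τ i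
    simp [hext, Equiv.permCongr_apply]
  have hext_last : ∀ τ : Equiv.Perm (Fin m), ext τ (Fin.last m) = Fin.last m := by
    intro τ
    simp [hext, Equiv.permCongr_apply]
  -- finRotate powers
  open Fin.NatCast in
  have hpow : ∀ (k : ℕ) (x : Fin (m+1)),
      ((finRotate (m+1)) ^ k) x = x + (k : Fin (m+1)) := by
    intro k
    induction k with
    | zero => intro x; simp
    | succ k ih =>
        intro x
        rw [pow_succ, Equiv.Perm.mul_apply, ih, finRotate_succ_apply]
        push_cast
        abel
  -- the bijection
  set F : Fin (m+1) × Equiv.Perm (Fin m) → Equiv.Perm (Fin (m+1)) :=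
    fun p => (finRotate (m+1)) ^ (p.1 : ℕ) * ext p.2 with hF
  have hinj : Function.Injective F := by
    rintro ⟨j, τ⟩ ⟨j', τ'⟩ h
    have hl : F (j, τ) (Fin.last m) = F (j', τ') (Fin.last m) := by rw [h]
    simp only [hF, Equiv.Perm.mul_apply, hext_last, hpow] at hl
    have hj : j = j' := by
      have := add_left_cancel hl
      rwa [Fin.cast_val_eq_self, Fin.cast_val_eq_self] at this
    subst hj
    have hee : ext τ = ext τ' :=
      mul_left_cancel (h : (finRotate (m+1)) ^ (j:ℕ) * ext τ = _)
    have : τ = τ' := by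
      ext i
      have h2 := congrArg (fun e : Equiv.Perm (Fin (m+1)) => e (Fin.castSucc i)) hee
      simp only [hext_cast] at h2
      exact congrArg Fin.val (Fin.castSucc_injective m h2)
    rw [this]
  have hbij : Function.Bijective F := by
    rw [Fintype.bijective_iff_injective_and_card]
    refine ⟨hinj, ?_⟩
    simp [Fintype.card_perm, Nat.factorial_succ, mul_comm]
  have hsum1 : ∑ σ : Equiv.Perm (Fin (m+1)), g σ = ∑ p, g (F p) :=
    (Fintype.sum_bijective F hbij _ _ fun p => rfl).symm
  have hFval : ∀ p : Fin (m+1) × Equiv.Perm (Fin m), g (F p) = g (ext p.2) := by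
    rintro ⟨j, τ⟩
    exact hrotpow (j : ℕ) (ext τ)
  -- value on extensions
  have hgext : ∀ τ : Equiv.Perm (Fin m),
      g (ext τ) = f (∑ i : Fin m,
        lam (Fin.castLE (Nat.sub_le (m+1) 1) i) * (((τ i : ℕ) : ℤ) + 1)) := by
    intro τ
    have hcast : ∀ i : Fin m, Fin.castLE (Nat.sub_le (m+1) 1) i = Fin.castSucc i := by
      intro i; rfl
    simp only [hg]
    rw [Fin.sum_univ_castSucc]
    have h1 : ∀ i : Fin m, lam (Fin.castSucc i)
        * ((((ext τ) (Fin.castSucc i) : ℕ) : ℤ) + 1)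
        = lam (Fin.castLE (Nat.sub_le (m+1) 1) i) * (((τ i : ℕ) : ℤ) + 1) := by
      intro i
      rw [hext_cast, hcast]
      simp
    rw [Finset.sum_congr rfl fun i _ => h1 i, hext_last]
    have h2 : lam (Fin.last m) * (((Fin.last m : ℕ) : ℤ) + 1)
        = ((m+1:ℕ):ℤ) * lam (Fin.last m) := by
      simp [Fin.last]; push_cast; ring
    rw [h2, hf']
  have main : ∑ σ : Equiv.Perm (Fin (m+1)), g σ
      = ((m+1 : ℕ) : ℂ) * ∑ τ : Equiv.Perm (Fin (m+1-1)),
          f (∑ i : Fin (m+1-1),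
            lam (Fin.castLE (Nat.sub_le (m+1) 1) i) * (((τ i : ℕ) : ℤ) + 1)) := by
    calc ∑ σ : Equiv.Perm (Fin (m+1)), g σ = ∑ p, g (F p) := hsum1
      _ = ∑ j : Fin (m+1), ∑ τ : Equiv.Perm (Fin m), g (F (j, τ)) := by
            rw [Fintype.sum_prod_type]
      _ = ∑ j : Fin (m+1), ∑ τ : Equiv.Perm (Fin m), g (ext τ) := by
            refine Finset.sum_congr rfl fun j _ => Finset.sum_congr rfl fun τ _ => ?_
            exact hFval (j, τ)
      _ = ((m+1 : ℕ) : ℂ) * ∑ τ : Equiv.Perm (Fin m), g (ext τ) := by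
            rw [Finset.sum_const, Finset.card_univ, Fintype.card_fin, nsmul_eq_mul]
      _ = _ := by
            rw [Finset.sum_congr rfl fun τ _ => hgext τ]
            rfl
  simpa only [hg] using main
end
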